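/- Let G be a closed subgroup of GL(n,ℝ) and 𝔤 = {A ∈ M_n(ℝ) : exp(tA) ∈ G for all t ∈ ℝ} its Lie algebra. If X: ℝ → M_n(ℝ) is continuous with X(s) ∈ 𝔤 for all s, then the holonomy stays in the group: hol_X(s) ∈ G for all s ∈ ℝ. -/

import Mathlib

/-!
The Euler products `exp (Δ • X ((N - 1) Δ)) ⋯ exp (Δ • X 0)` with `Δ = s / N` lie in `G`, and they
converge to `hol s`: on each step Grönwall's inequality compares `hol` with the flow of the frozen
coefficient, and the errors add up to `o(1)` by uniform continuity of `X`. Their inverses are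
bounded by `‖1‖ * exp (s * sup ‖X‖)` uniformly in `N`, so `hol s`, being close to one of them, is a
unit; closedness of `G` in the group of units then puts it in `G`. Negative times follow by
reversing time.
-/

open NormedSpace Set Filter Topology

lemma gronwallBound_le_gronwallBound_add {δ δ' K ε x y : ℝ} (h : δ' ≤ gronwallBound δ K ε x) :
    gronwallBound δ' K ε y ≤ gronwallBound δ K ε (x + y) := by
  rcases eq_or_ne K 0 with rfl | hK
  · simp only [gronwallBound_K0] at h ⊢
    linarith
  · simp only [gronwallBound_of_K_ne_0 hK] at h ⊢
    have hexp : Real.exp (K * (x + y)) = Real.exp (K * x) * Real.exp (K * y) := by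
      rw [mul_add, Real.exp_add]
    rw [hexp]
    nlinarith [mul_le_mul_of_nonneg_right h (Real.exp_pos (K * y)).le]

lemma Subgroup.mem_image_val_of_tendsto {R ι : Type*} [NormedRing R] [HasSummableGeomSeries R]
    {G : Subgroup Rˣ} (hG : IsClosed (G : Set Rˣ)) {l : Filter ι} [l.NeBot] {u : ι → Rˣ}
    {a : R} {M : ℝ} (huG : ∀ᶠ i in l, u i ∈ G) (hM : ∀ᶠ i in l, ‖(↑(u i)⁻¹ : R)‖ ≤ M)
    (ha : Tendsto (fun i ↦ (u i : R)) l (𝓝 a)) : a ∈ Units.val '' (G : Set Rˣ) := by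
  rcases subsingleton_or_nontrivial R with _ | _
  · exact ⟨1, G.one_mem, Subsingleton.elim _ _⟩
  obtain ⟨M₀, hM₀⟩ := hM.exists
  have hMpos : 0 < M := (Units.norm_pos _).trans_le hM₀
  have hclose : ∀ᶠ i in l, ‖a - u i‖ < M⁻¹ := by
    simpa [dist_eq_norm, norm_sub_rev] using
      (Metric.tendsto_nhds.1 ha) M⁻¹ (inv_pos.2 hMpos)
  obtain ⟨i, hi, hMi⟩ := (hclose.and hM).exists
  -- `a` is within `‖(u i)⁻¹‖⁻¹` of the unit `u i`, hence itself a unit.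
  set w := (u i).ofNearby a (hi.trans_le (inv_anti₀ (Units.norm_pos _) hMi))
  have hw : Tendsto u l (𝓝 w) := Units.isOpenEmbedding_val.isEmbedding.tendsto_nhds_iff.2 ha
  exact ⟨w, hG.mem_of_tendsto hw huG, rfl⟩

section NormedAlgebra

variable {𝔸 : Type*} [NormedRing 𝔸] [NormedAlgebra ℝ 𝔸]

def Subgroup.lieAlgebraSet (G : Subgroup 𝔸ˣ) : Set 𝔸 :=
  {A | ∀ t : ℝ, exp (t • A) ∈ Units.val '' (G : Set 𝔸ˣ)}

lemma Subgroup.neg_mem_lieAlgebraSet {G : Subgroup 𝔸ˣ} {A : 𝔸} (hA : A ∈ G.lieAlgebraSet) :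
    -A ∈ G.lieAlgebraSet :=
  fun t ↦ by simpa only [smul_neg, neg_smul] using hA (-t)

noncomputable def eulerProd (X : ℝ → 𝔸) (Δ : ℝ) : ℕ → 𝔸
  | 0 => 1
  | k + 1 => exp (Δ • X (k * Δ)) * eulerProd X Δ k

variable [CompleteSpace 𝔸]

lemma exp_mul_exp_neg (x : 𝔸) : exp x * exp (-x) = 1 := by
  let : NormedAlgebra ℚ 𝔸 := NormedAlgebra.restrictScalars ℚ ℝ 𝔸
  rw [← exp_add_of_commute (Commute.refl x).neg_right, add_neg_cancel, exp_zero]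

lemma norm_mul_exp_smul_le (u A : 𝔸) {t : ℝ} (ht : 0 ≤ t) :
    ‖u * exp (t • A)‖ ≤ ‖u‖ * Real.exp (‖A‖ * t) := by
  have hderiv (τ : ℝ) : HasDerivAt (fun τ : ℝ ↦ u * exp (τ • A)) (u * exp (τ • A) * A) τ := by
    simpa only [mul_assoc] using (hasDerivAt_exp_smul_const A τ).const_mul u
  have := norm_le_gronwallBound_of_norm_deriv_right_le (δ := ‖u‖) (K := ‖A‖) (ε := 0)
    (fun τ _ ↦ (hderiv τ).continuousAt.continuousWithinAt)
    (fun τ _ ↦ (hderiv τ).hasDerivWithinAt) (by simp)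
    (fun τ _ ↦ by rw [add_zero, mul_comm]; exact norm_mul_le _ A) t ⟨ht, le_rfl⟩
  simpa [gronwallBound_ε0] using this

/-- Grönwall's inequality, comparing `f` with the solution `τ ↦ exp ((τ - a) • A) * u` of the
frozen equation `e' = A e`. -/
lemma norm_sub_exp_smul_mul_le {X f : ℝ → 𝔸} {A u : 𝔸} {a h K η H : ℝ} (hh : 0 ≤ h)
    (hf : ∀ τ ∈ Icc a (a + h), HasDerivAt f (X τ * f τ) τ) (hA : ‖A‖ ≤ K)
    (hXA : ∀ τ ∈ Icc a (a + h), ‖X τ - A‖ ≤ η) (hfH : ∀ τ ∈ Icc a (a + h), ‖f τ‖ ≤ H) :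
    ‖f (a + h) - exp (h • A) * u‖ ≤ gronwallBound ‖f a - u‖ K (η * H) h := by
  set e : ℝ → 𝔸 := fun τ ↦ exp ((τ - a) • A) * u
  have he (τ : ℝ) : HasDerivAt e (A * e τ) τ := by
    simpa only [mul_assoc] using
      ((hasDerivAt_exp_smul_const' A (τ - a)).comp_sub_const τ a).mul_const u
  have hderiv : ∀ τ ∈ Icc a (a + h),
      HasDerivAt (fun τ ↦ f τ - e τ) (A * (f τ - e τ) + (X τ - A) * f τ) τ := fun τ hτ ↦
    ((hf τ hτ).sub (he τ)).congr_deriv (by noncomm_ring)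
  have hη : 0 ≤ η := (norm_nonneg _).trans (hXA a ⟨le_rfl, by linarith⟩)
  have hbound : ∀ τ ∈ Ico a (a + h),
      ‖A * (f τ - e τ) + (X τ - A) * f τ‖ ≤ K * ‖f τ - e τ‖ + η * H := fun τ hτ ↦ by
    have hτ' := Ico_subset_Icc_self hτ
    calc _ ≤ ‖A‖ * ‖f τ - e τ‖ + ‖X τ - A‖ * ‖f τ‖ :=
          (norm_add_le _ _).trans (add_le_add (norm_mul_le _ _) (norm_mul_le _ _))
      _ ≤ K * ‖f τ - e τ‖ + η * H := by
          gcongr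
          exacts [hXA τ hτ', hfH τ hτ']
  have := norm_le_gronwallBound_of_norm_deriv_right_le (δ := ‖f a - u‖)
    (fun τ hτ ↦ (hderiv τ hτ).continuousAt.continuousWithinAt)
    (fun τ hτ ↦ (hderiv τ (Ico_subset_Icc_self hτ)).hasDerivWithinAt)
    (by simp [e]) hbound (a + h) ⟨by linarith, le_rfl⟩
  simpa [e] using this

lemma norm_sub_eulerProd_mul_le {X f : ℝ → 𝔸} {Δ b K η H : ℝ} (hΔ : 0 ≤ Δ)
    (hf : ∀ τ ∈ Icc 0 b, HasDerivAt f (X τ * f τ) τ) (hK : ∀ τ ∈ Icc 0 b, ‖X τ‖ ≤ K)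
    (hη : ∀ τ ∈ Icc 0 b, ∀ τ' ∈ Icc 0 b, |τ - τ'| ≤ Δ → ‖X τ - X τ'‖ ≤ η)
    (hfH : ∀ τ ∈ Icc 0 b, ‖f τ‖ ≤ H) (k : ℕ) (hk : k * Δ ≤ b) :
    ‖f (k * Δ) - eulerProd X Δ k * f 0‖ ≤ gronwallBound 0 K (η * H) (k * Δ) := by
  induction k with
  | zero => simp [eulerProd, gronwallBound_x0]
  | succ k ih =>
    have hstep : ((k + 1 : ℕ) : ℝ) * Δ = k * Δ + Δ := by push_cast; ring
    rw [hstep] at hk ⊢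
    have hsub : Icc (k * Δ) (k * Δ + Δ) ⊆ Icc 0 b := Icc_subset_Icc (by positivity) hk
    have hkb : (k : ℝ) * Δ ∈ Icc 0 b := hsub ⟨le_rfl, by linarith⟩
    have := norm_sub_exp_smul_mul_le (u := eulerProd X Δ k * f 0) hΔ
      (fun τ hτ ↦ hf τ (hsub hτ)) (hK _ hkb)
      (fun τ hτ ↦ hη τ (hsub hτ) _ hkb (abs_le.2 ⟨by linarith [hτ.1], by linarith [hτ.2]⟩))
      (fun τ hτ ↦ hfH τ (hsub hτ))
    rw [eulerProd, mul_assoc]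
    exact this.trans (gronwallBound_le_gronwallBound_add (ih (by linarith)))

theorem tendsto_eulerProd_mul {X f : ℝ → 𝔸} {s : ℝ} (hs : 0 ≤ s) (hX : ContinuousOn X (Icc 0 s))
    (hf : ∀ τ ∈ Icc 0 s, HasDerivAt f (X τ * f τ) τ) :
    Tendsto (fun N : ℕ ↦ eulerProd X (s / N) N * f 0) atTop (𝓝 (f s)) := by
  obtain ⟨K, hK⟩ := isCompact_Icc.exists_bound_of_continuousOn hX
  obtain ⟨H, hfH⟩ := isCompact_Icc.exists_bound_of_continuousOn
    fun τ hτ ↦ (hf τ hτ).continuousAt.continuousWithinAt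
  have hbound : Tendsto (fun η ↦ gronwallBound 0 K (η * H) s) (𝓝[>] 0) (𝓝 0) := by
    have := ((gronwallBound_continuous_ε 0 K s).comp (continuous_mul_const H)).tendsto 0
    simpa [Function.comp_def, gronwallBound_ε0_δ0] using this.mono_left nhdsWithin_le_nhds
  rw [Metric.tendsto_atTop]
  intro ε hε
  obtain ⟨η, hηε, hη⟩ := ((hbound.eventually (gt_mem_nhds hε)).and self_mem_nhdsWithin).exists
  obtain ⟨δ, hδ, hXδ⟩ :=
    Metric.uniformContinuousOn_iff.1 (isCompact_Icc.uniformContinuousOn_of_continuous hX) η hη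
  obtain ⟨N₀, hN₀⟩ := exists_nat_gt (s / δ)
  refine ⟨N₀, fun N hN ↦ ?_⟩
  have hNpos : (0 : ℝ) < N := (div_nonneg hs hδ.le).trans_lt (hN₀.trans_le (by exact_mod_cast hN))
  have hNs : (N : ℝ) * (s / N) = s := mul_div_cancel₀ s hNpos.ne'
  have hΔδ : s / N < δ := by
    rw [div_lt_iff₀ hNpos, mul_comm]
    rw [div_lt_iff₀ hδ] at hN₀
    exact hN₀.trans_le (by gcongr)
  have := norm_sub_eulerProd_mul_le (div_nonneg hs hNpos.le) hf hK
    (fun τ hτ τ' hτ' hττ' ↦ by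
      simpa [dist_eq_norm] using (hXδ τ hτ τ' hτ' (by rw [Real.dist_eq]; linarith)).le)
    hfH N hNs.le
  rw [hNs] at this
  rw [dist_eq_norm, norm_sub_rev]
  exact this.trans_lt hηε

namespace Subgroup

variable {G : Subgroup 𝔸ˣ}

lemma exists_mem_eq_eulerProd {X : ℝ → 𝔸} {Δ b K : ℝ} (hΔ : 0 ≤ Δ)
    (hXG : ∀ τ ∈ Icc 0 b, X τ ∈ G.lieAlgebraSet) (hK : ∀ τ ∈ Icc 0 b, ‖X τ‖ ≤ K)
    (k : ℕ) (hk : k * Δ ≤ b) :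
    ∃ u ∈ G, (u : 𝔸) = eulerProd X Δ k ∧ ‖(↑u⁻¹ : 𝔸)‖ ≤ ‖(1 : 𝔸)‖ * Real.exp (K * (k * Δ)) := by
  induction k with
  | zero => exact ⟨1, G.one_mem, rfl, by simp⟩
  | succ k ih =>
    have hstep : ((k + 1 : ℕ) : ℝ) * Δ = k * Δ + Δ := by push_cast; ring
    rw [hstep] at hk ⊢
    have hkb : (k : ℝ) * Δ ∈ Icc 0 b := ⟨by positivity, by linarith⟩
    obtain ⟨u, hu, hu_eq, hu_inv⟩ := ih (by linarith)
    obtain ⟨v, hv, hv_eq⟩ := hXG _ hkb Δ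
    have hv_inv : (↑v⁻¹ : 𝔸) = exp (Δ • -X (k * Δ)) :=
      Units.inv_eq_of_mul_eq_one_right (by rw [hv_eq, smul_neg, exp_mul_exp_neg])
    refine ⟨v * u, G.mul_mem hv hu, by rw [Units.val_mul, hv_eq, hu_eq, eulerProd], ?_⟩
    calc ‖(↑(v * u)⁻¹ : 𝔸)‖ = ‖(↑u⁻¹ : 𝔸) * exp (Δ • -X (k * Δ))‖ := by
          rw [mul_inv_rev, Units.val_mul, hv_inv]
      _ ≤ ‖(↑u⁻¹ : 𝔸)‖ * Real.exp (‖-X (k * Δ)‖ * Δ) := norm_mul_exp_smul_le _ _ hΔ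
      _ ≤ ‖(1 : 𝔸)‖ * Real.exp (K * (k * Δ)) * Real.exp (K * Δ) := by
          gcongr
          rw [norm_neg]
          exact hK _ hkb
      _ = ‖(1 : 𝔸)‖ * Real.exp (K * (k * Δ + Δ)) := by rw [mul_assoc, ← Real.exp_add, mul_add]

theorem holonomy_mem_of_nonneg (hG : IsClosed (G : Set 𝔸ˣ)) {X f : ℝ → 𝔸} {s : ℝ} (hs : 0 ≤ s)
    (hX : ContinuousOn X (Icc 0 s)) (hXG : ∀ τ ∈ Icc 0 s, X τ ∈ G.lieAlgebraSet)
    (hf : ∀ τ ∈ Icc 0 s, HasDerivAt f (X τ * f τ) τ) (hf0 : f 0 = 1) :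
    f s ∈ Units.val '' (G : Set 𝔸ˣ) := by
  obtain ⟨K, hK⟩ := isCompact_Icc.exists_bound_of_continuousOn hX
  have hunits (N : ℕ) : ∃ u ∈ G, (u : 𝔸) = eulerProd X (s / (N + 1 : ℕ)) (N + 1) ∧
      ‖(↑u⁻¹ : 𝔸)‖ ≤ ‖(1 : 𝔸)‖ * Real.exp (K * s) := by
    have hNs : ((N + 1 : ℕ) : ℝ) * (s / (N + 1 : ℕ)) = s :=
      mul_div_cancel₀ s (Nat.cast_ne_zero.2 N.succ_ne_zero)
    simpa only [hNs] using
      exists_mem_eq_eulerProd (div_nonneg hs (Nat.cast_nonneg _)) hXG hK (N + 1) hNs.le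
  choose u huG hu_eq hu_inv using hunits
  refine mem_image_val_of_tendsto hG (l := atTop) (.of_forall huG) (.of_forall hu_inv) ?_
  simpa [Function.comp_def, hu_eq, hf0] using
    (tendsto_eulerProd_mul hs hX hf).comp (tendsto_add_atTop_nat 1)

theorem holonomy_mem (hG : IsClosed (G : Set 𝔸ˣ)) {X f : ℝ → 𝔸} (hX : Continuous X)
    (hXG : ∀ τ, X τ ∈ G.lieAlgebraSet) (hf : ∀ τ, HasDerivAt f (X τ * f τ) τ) (hf0 : f 0 = 1)
    (s : ℝ) : f s ∈ Units.val '' (G : Set 𝔸ˣ) := by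
  rcases le_total 0 s with hs | hs
  · exact holonomy_mem_of_nonneg hG hs hX.continuousOn (fun τ _ ↦ hXG τ) (fun τ _ ↦ hf τ) hf0
  have hrev (τ : ℝ) : HasDerivAt (fun τ ↦ f (-τ)) (-X (-τ) * f (-τ)) τ := by
    simpa [Function.comp_def] using (hf (-τ)).scomp τ (hasDerivAt_neg τ)
  simpa using holonomy_mem_of_nonneg hG (X := fun τ ↦ -X (-τ)) (neg_nonneg.2 hs)
    (hX.comp continuous_neg).neg.continuousOn (fun τ _ ↦ neg_mem_lieAlgebraSet (hXG _))
    (fun τ _ ↦ hrev τ) (by simpa using hf0)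

end Subgroup

end NormedAlgebra

attribute [local instance] Matrix.linftyOpNormedAddCommGroup Matrix.linftyOpNormedRing
  Matrix.linftyOpNormedAlgebra

/-- Let `G` be a closed subgroup of `GL(n,ℝ)` with Lie algebra
`𝔤 = {A : exp(tA) ∈ G for all t}`.  If `X : ℝ → M_n(ℝ)` is continuous with values in `𝔤`,
then the holonomy of `X` (the solution of `∂ₛ hol = X·hol`, `hol 0 = 1`) stays in `G`. -/
theorem holonomy_stays_in_closed_subgroup
    (n : ℕ) (G : Subgroup (Matrix (Fin n) (Fin n) ℝ)ˣ)
    (hGclosed : IsClosed (G : Set (Matrix (Fin n) (Fin n) ℝ)ˣ))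
    (X : ℝ → Matrix (Fin n) (Fin n) ℝ) (hX : Continuous X)
    (hmem : ∀ s, X s ∈ {A : Matrix (Fin n) (Fin n) ℝ |
      ∀ t : ℝ, ∃ u : (Matrix (Fin n) (Fin n) ℝ)ˣ, u ∈ G ∧ (u : Matrix (Fin n) (Fin n) ℝ)
        = NormedSpace.exp (t • A)})
    (hol : ℝ → Matrix (Fin n) (Fin n) ℝ)
    (hhol : ∀ s, HasDerivAt hol (X s * hol s) s) (hhol0 : hol 0 = 1) :
    ∀ s : ℝ, ∃ u : (Matrix (Fin n) (Fin n) ℝ)ˣ, u ∈ G ∧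
      (u : Matrix (Fin n) (Fin n) ℝ) = hol s :=
  fun s ↦ Subgroup.holonomy_mem hGclosed hX hmem hhol hhol0 s
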